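/- There exists a critical value y_c with 1 ≤ y_c ≤ μ² such that μ(y) = μ for all 0 < y ≤ y_c and μ(y) > μ for all y > y_c, where μ is the growth constant of self-avoiding walks on ℤ² and μ(y) is the half-plane growth constant with surface fugacity y. -/

import Mathlib

open Filter

/-- `IsSAW d n w` : `w` is an `n`-step self-avoiding walk on `ℤ^d`,
i.e. an injective map from `{0,…,n}` to `ℤ^d` starting at the origin whose
consecutive points are at `ℓ¹` distance `1`. -/
def IsSAW (d n : ℕ) (w : Fin (n + 1) → Fin d → ℤ) : Prop :=
  Function.Injective w ∧ w 0 = 0 ∧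
    ∀ i : Fin n, (∑ k, |w i.succ k - w i.castSucc k|) = 1

/-- `sawCount d n` : the number `c_n` of `n`-step self-avoiding walks on `ℤ^d`. -/
noncomputable def sawCount (d n : ℕ) : ℕ :=
  Nat.card {w : Fin (n + 1) → Fin d → ℤ // IsSAW d n w}

/-- An `n`-step half-plane self-avoiding walk on `ℤ²`: a SAW staying in the
upper half-plane `{(x₁,x₂) : x₂ ≥ 0}`. -/
def IsHalfPlaneSAW (n : ℕ) (w : Fin (n + 1) → Fin 2 → ℤ) : Prop :=
  IsSAW 2 n w ∧ ∀ i, 0 ≤ w i 1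

/-- `hpCount n i` : the number `c_n^+(i)` of `n`-step half-plane SAWs having
exactly `i` vertices on the surface (i.e. indices `j` with `w(j)₂ = 0`). -/
noncomputable def hpCount (n i : ℕ) : ℕ :=
  Nat.card {w : Fin (n + 1) → Fin 2 → ℤ // IsHalfPlaneSAW n w ∧
    (Finset.univ.filter fun j => w j 1 = 0).card = i}

/-- `hpPartition n y` : the partition function `C_n^+(y) = Σ_i c_n^+(i) y^i`. -/
noncomputable def hpPartition (n : ℕ) (y : ℝ) : ℝ :=
  ∑ i ∈ Finset.range (n + 2), (hpCount n i : ℝ) * y ^ i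

/-!
Write `C_n(y)` for `hpPartition n y` and `h_n` for the number of `n`-step half-plane walks.
Cutting a walk at a lowest vertex gives two half-plane walks, so `c_n ≤ ∑ h_j h_{n-j}`; shifting a
half-plane walk up by one and attaching it to the origin leaves a single surface contact, so
`y h_m ≤ C_{m+1}(y)`. Together these force `μ(y) ≥ μ` for every `y > 0`. In the other direction
`C_n(1) ≤ c_n` and `C_n(y) ≥ y^(n+1)`, and `C_n` is increasing with
`C_n(z) ≤ (z/y)^(n+1) C_n(y)` for `y ≤ z`. Hence the fugacities at which `C_n(y)` grows no faster
than `μ^n` form an interval `(0, y_c]` with `1 ≤ y_c ≤ μ`, and the last inequality makes the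
interval closed at `y_c`.
-/

open Topology Finset Function

/-- For `a ≥ 0` this says `limsup a n ^ (1 / n) ≤ μ`, without the boundedness side conditions
that `limsup` on `ℝ` needs. -/
def ExpGrowthLE (a : ℕ → ℝ) (μ : ℝ) : Prop :=
  ∀ q > μ, ∀ᶠ n in atTop, a n ≤ q ^ n

section ExpGrowth

variable {a b : ℕ → ℝ} {μ q : ℝ}

lemma ExpGrowthLE.mono (h : ExpGrowthLE b μ) (hab : ∀ n, a n ≤ b n) : ExpGrowthLE a μ :=
  fun q hq => (h q hq).mono fun n hn => (hab n).trans hn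

lemma ExpGrowthLE.exists_forall_le_mul_pow (h : ExpGrowthLE a μ) (hμq : μ < q) (hq : 0 < q) :
    ∃ M, ∀ n, a n ≤ M * q ^ n := by
  have hev : ∀ᶠ n in atTop, a n / q ^ n ≤ 1 :=
    (h q hμq).mono fun n hn => (div_le_one (pow_pos hq n)).2 hn
  obtain ⟨M, hM⟩ := (isBoundedUnder_of_eventually_le hev).bddAbove_range
  exact ⟨M, fun n => (div_le_iff₀ (pow_pos hq n)).1 (hM ⟨n, rfl⟩)⟩

lemma eventually_mul_add_one_le_pow (C : ℝ) {r : ℝ} (hr : 1 < r) :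
    ∀ᶠ n : ℕ in atTop, C * (n + 1) ≤ r ^ n := by
  have hlim :
      Tendsto (fun n : ℕ => C * ((n : ℝ) ^ 1 / r ^ n + r⁻¹ ^ n)) atTop (𝓝 (C * (0 + 0))) :=
    ((tendsto_pow_const_div_const_pow_of_one_lt 1 hr).add
      (tendsto_pow_atTop_nhds_zero_of_lt_one (by positivity) (inv_lt_one_of_one_lt₀ hr))).const_mul C
  filter_upwards [hlim.eventually_lt_const (by simp : C * (0 + 0) < 1)] with n hn
  have hrn : 0 < r ^ n := pow_pos (by linarith) n
  have hsum : C * ((n : ℝ) ^ 1 / r ^ n + r⁻¹ ^ n) = C * (n + 1) / r ^ n := by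
    rw [pow_one, inv_pow]
    field_simp
  rw [hsum, div_lt_one hrn] at hn
  exact hn.le

lemma expGrowthLE_of_le_mul_pow {M : ℝ} (hq : 0 < q) (h : ∀ n, a n ≤ M * (n + 1) * q ^ n) :
    ExpGrowthLE a q := by
  intro r hr
  filter_upwards [eventually_mul_add_one_le_pow M ((one_lt_div hq).2 hr)] with n hn
  calc a n ≤ M * (n + 1) * q ^ n := h n
    _ ≤ (r / q) ^ n * q ^ n := by gcongr
    _ = r ^ n := by rw [div_pow, div_mul_cancel₀ _ (pow_pos hq n).ne']

lemma expGrowthLE_iff_of_tendsto {L : ℝ} (ha : ∀ n, 0 ≤ a n) (hμ : 0 ≤ μ)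
    (h : Tendsto (fun n : ℕ => a n ^ (1 / (n : ℝ))) atTop (𝓝 L)) :
    ExpGrowthLE a μ ↔ L ≤ μ := by
  constructor
  · refine fun hg => le_of_forall_gt_imp_ge_of_dense fun q hq => le_of_tendsto h ?_
    filter_upwards [hg q hq, eventually_ne_atTop 0] with n hn hn0
    calc a n ^ (1 / (n : ℝ)) ≤ (q ^ n) ^ (1 / (n : ℝ)) := by gcongr; exact ha n
      _ = q := by rw [one_div, Real.pow_rpow_inv_natCast (by linarith) hn0]
  · intro hL q hq
    filter_upwards [h.eventually_lt_const (hL.trans_lt hq), eventually_ne_atTop 0] with n hn hn0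
    calc a n = (a n ^ (1 / (n : ℝ))) ^ n := by rw [one_div, Real.rpow_inv_natCast_pow (ha n) hn0]
      _ ≤ q ^ n := by gcongr; exact Real.rpow_nonneg (ha n) _

lemma sum_range_mul_sub_le {K : ℝ} (hb : ∀ n, 0 ≤ b n) (h : ∀ n, b n ≤ K * q ^ n)
    (n : ℕ) : ∑ j ∈ range (n + 1), b j * b (n - j) ≤ K ^ 2 * (n + 1) * q ^ n := by
  calc ∑ j ∈ range (n + 1), b j * b (n - j)
      ≤ ∑ j ∈ range (n + 1), (K * q ^ j) * (K * q ^ (n - j)) :=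
        sum_le_sum fun j _ => mul_le_mul (h j) (h _) (hb _) ((hb j).trans (h j))
    _ = ∑ _j ∈ range (n + 1), K ^ 2 * q ^ n := sum_congr rfl fun j hj => by
        rw [mul_mul_mul_comm, ← pow_add, Nat.add_sub_cancel' (mem_range_succ_iff.1 hj), sq]
    _ = K ^ 2 * (n + 1) * q ^ n := by simp; ring

end ExpGrowth

namespace IsSAW

variable {d n : ℕ} {w : Fin (n + 1) → Fin d → ℤ}

lemma abs_step_le (hw : IsSAW d n w) (i : Fin n) (k : Fin d) :
    |w i.succ k - w i.castSucc k| ≤ 1 :=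
  hw.2.2 i ▸ single_le_sum (f := fun k => |w i.succ k - w i.castSucc k|)
    (fun _ _ => abs_nonneg _) (mem_univ k)

lemma sum_abs_sub_eq_one (hw : IsSAW d n w) {a b : Fin (n + 1)} (hab : (a : ℕ) = b + 1) :
    ∑ k, |w a k - w b k| = 1 := by
  obtain ⟨s, rfl, rfl⟩ : ∃ s : Fin n, a = s.succ ∧ b = s.castSucc :=
    ⟨⟨b, by omega⟩, Fin.ext (by simp [hab]), Fin.ext (by simp)⟩
  exact hw.2.2 s

lemma ext_of_steps {w' : Fin (n + 1) → Fin d → ℤ} (hw : IsSAW d n w) (hw' : IsSAW d n w')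
    (h : ∀ i : Fin n, w i.succ - w i.castSucc = w' i.succ - w' i.castSucc) : w = w' := by
  funext i
  induction i using Fin.induction with
  | zero => rw [hw.2.1, hw'.2.1]
  | succ i ih => rw [← sub_add_cancel (w i.succ) (w i.castSucc), h i, ih, sub_add_cancel]

lemma comp_sub (hw : IsSAW d n w) {m : ℕ} {f : Fin (m + 1) → Fin (n + 1)} {a : Fin (n + 1)}
    (hf : Injective f) (hf0 : f 0 = a)
    (hadj : ∀ i : Fin m, (f i.succ : ℕ) = f i.castSucc + 1 ∨ (f i.castSucc : ℕ) = f i.succ + 1) :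
    IsSAW d m (fun i => w (f i) - w a) := by
  refine ⟨fun i j h => hf (hw.1 (sub_left_injective h)), by simp [hf0], fun i => ?_⟩
  simp only [Pi.sub_apply, sub_sub_sub_cancel_right]
  rcases hadj i with h | h
  · exact hw.sum_abs_sub_eq_one h
  · simpa only [abs_sub_comm] using hw.sum_abs_sub_eq_one h

end IsSAW

lemma finite_setOf_isSAW (d n : ℕ) : {w | IsSAW d n w}.Finite := by
  let steps : {w // IsSAW d n w} → Fin n → Fin d → Set.Icc (-1 : ℤ) 1 :=
    fun w i k => ⟨w.1 i.succ k - w.1 i.castSucc k, abs_le.1 (w.2.abs_step_le i k)⟩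
  refine Set.finite_coe_iff.1 (Finite.of_injective steps fun w w' h => Subtype.ext ?_)
  exact w.2.ext_of_steps w'.2 fun i => funext fun k =>
    congrArg Subtype.val (congrFun (congrFun h i) k)

instance (d n : ℕ) : Finite {w : Fin (n + 1) → Fin d → ℤ // IsSAW d n w} :=
  (finite_setOf_isSAW d n).to_subtype

instance (n : ℕ) : Finite {w : Fin (n + 1) → Fin 2 → ℤ // IsHalfPlaneSAW n w} :=
  ((finite_setOf_isSAW 2 n).subset fun _ hw => hw.1).to_subtype

instance (n i : ℕ) : Finite {w : Fin (n + 1) → Fin 2 → ℤ // IsHalfPlaneSAW n w ∧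
    (univ.filter fun j => w j 1 = 0).card = i} :=
  ((finite_setOf_isSAW 2 n).subset fun _ hw => hw.1.1).to_subtype

noncomputable def hpTotal (n : ℕ) : ℕ :=
  Nat.card {w : Fin (n + 1) → Fin 2 → ℤ // IsHalfPlaneSAW n w}

def straightWalk (n : ℕ) : Fin (n + 1) → Fin 2 → ℤ := fun i => ![i, 0]

lemma isHalfPlaneSAW_straightWalk (n : ℕ) : IsHalfPlaneSAW n (straightWalk n) := by
  refine ⟨⟨fun i j h => Fin.ext (by simpa [straightWalk] using congrFun h 0), ?_, fun i => ?_⟩,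
    fun i => by simp [straightWalk]⟩
  · ext k; fin_cases k <;> simp [straightWalk]
  · simp [straightWalk, Fin.sum_univ_two]

lemma one_le_sawCount (n : ℕ) : 1 ≤ sawCount 2 n :=
  Nat.card_pos_iff.2 ⟨⟨⟨_, (isHalfPlaneSAW_straightWalk n).1⟩⟩, inferInstance⟩

lemma one_le_hpCount_succ (n : ℕ) : 1 ≤ hpCount n (n + 1) := by
  refine Nat.card_pos_iff.2 ⟨⟨⟨straightWalk n, isHalfPlaneSAW_straightWalk n, ?_⟩⟩, inferInstance⟩
  rw [filter_true_of_mem fun j _ => by simp [straightWalk], card_univ, Fintype.card_fin]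

lemma sum_hpCount_le_sawCount (n : ℕ) : ∑ i ∈ range (n + 2), hpCount n i ≤ sawCount 2 n := by
  rw [← Fin.sum_univ_eq_sum_range]
  unfold hpCount
  rw [← Nat.card_sigma]
  refine Nat.card_le_card_of_injective (fun p => ⟨p.2.1, p.2.2.1.1⟩) ?_
  rintro ⟨i, w, hw, hi⟩ ⟨i', w', hw', hi'⟩ h
  obtain rfl : w = w' := congrArg Subtype.val h
  obtain rfl : i = i' := Fin.ext (hi.symm.trans hi')
  rfl

def liftWalk {m : ℕ} (w : Fin (m + 1) → Fin 2 → ℤ) : Fin (m + 2) → Fin 2 → ℤ :=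
  Fin.cons 0 fun i => w i + Pi.single 1 1

section liftWalk

variable {m : ℕ} {w : Fin (m + 1) → Fin 2 → ℤ}

lemma liftWalk_succ_one (w : Fin (m + 1) → Fin 2 → ℤ) (i : Fin (m + 1)) :
    liftWalk w i.succ 1 = w i 1 + 1 := by
  simp [liftWalk]

lemma isHalfPlaneSAW_liftWalk (hw : IsHalfPlaneSAW m w) : IsHalfPlaneSAW (m + 1) (liftWalk w) := by
  refine ⟨⟨Fin.cons_injective_iff.2 ⟨?_, (add_left_injective _).comp hw.1.1⟩, rfl, fun i => ?_⟩,
    fun i => ?_⟩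
  · rintro ⟨i, hi⟩
    have := congrFun hi 1
    simp only [Pi.add_apply, Pi.single_eq_same, Pi.zero_apply] at this
    linarith [hw.2 i]
  · cases i using Fin.cases with
    | zero => simp [liftWalk, hw.1.2.1, Fin.sum_univ_two]
    | succ s => simpa [liftWalk, ← Fin.succ_castSucc] using hw.1.2.2 s
  · cases i using Fin.cases with
    | zero => simp [liftWalk]
    | succ i => rw [liftWalk_succ_one]; linarith [hw.2 i]

lemma card_filter_liftWalk (hw : ∀ i, 0 ≤ w i 1) :
    (univ.filter fun j => liftWalk w j 1 = 0).card = 1 := by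
  rw [card_eq_one]
  refine ⟨0, eq_singleton_iff_unique_mem.2 ⟨mem_filter.2 ⟨mem_univ _, rfl⟩, fun j hj => ?_⟩⟩
  cases j using Fin.cases with
  | zero => rfl
  | succ i =>
    rw [mem_filter, liftWalk_succ_one] at hj
    linarith [hw i, hj.2]

end liftWalk

lemma hpTotal_le_hpCount_succ_one (m : ℕ) : hpTotal m ≤ hpCount (m + 1) 1 :=
  Nat.card_le_card_of_injective
    (fun w => ⟨liftWalk w.1, isHalfPlaneSAW_liftWalk w.2, card_filter_liftWalk w.2.2⟩)
    fun _ _ h => Subtype.ext (add_left_injective _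
      (Fin.cons_right_injective (α := fun _ => Fin 2 → ℤ) 0 (congrArg Subtype.val h)))

section split

variable {n : ℕ}

noncomputable def lowestIndex (w : Fin (n + 1) → Fin 2 → ℤ) : Fin (n + 1) :=
  (Finite.exists_min fun i => w i 1).choose

lemma lowestIndex_le (w : Fin (n + 1) → Fin 2 → ℤ) (i : Fin (n + 1)) :
    w (lowestIndex w) 1 ≤ w i 1 :=
  (Finite.exists_min fun i => w i 1).choose_spec i

def headWalk (w : Fin (n + 1) → Fin 2 → ℤ) (j : Fin (n + 1)) : Fin (j + 1) → Fin 2 → ℤ :=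
  fun i => w ⟨j - i, by omega⟩ - w j

def tailWalk (w : Fin (n + 1) → Fin 2 → ℤ) (j : Fin (n + 1)) : Fin (n - j + 1) → Fin 2 → ℤ :=
  fun i => w ⟨j + i, by omega⟩ - w j

variable {w : Fin (n + 1) → Fin 2 → ℤ} {j : Fin (n + 1)}

lemma isHalfPlaneSAW_headWalk (hw : IsSAW 2 n w) (hj : ∀ i, w j 1 ≤ w i 1) :
    IsHalfPlaneSAW j (headWalk w j) :=
  ⟨hw.comp_sub (fun a b h => Fin.ext (by have := congrArg Fin.val h; simp at this; omega))
      (Fin.ext (by simp)) fun i => Or.inr (by simp; omega),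
    fun i => sub_nonneg.2 (hj _)⟩

lemma isHalfPlaneSAW_tailWalk (hw : IsSAW 2 n w) (hj : ∀ i, w j 1 ≤ w i 1) :
    IsHalfPlaneSAW (n - j) (tailWalk w j) :=
  ⟨hw.comp_sub (fun a b h => Fin.ext (by have := congrArg Fin.val h; simp at this; omega))
      (Fin.ext (by simp)) fun i => Or.inl (by simp; omega),
    fun i => sub_nonneg.2 (hj _)⟩

abbrev HalfPlanePairs (n : ℕ) : Type :=
  Σ j : Fin (n + 1), {u : Fin (j + 1) → Fin 2 → ℤ // IsHalfPlaneSAW j u} ×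
    {v : Fin (n - j + 1) → Fin 2 → ℤ // IsHalfPlaneSAW (n - j) v}

lemma card_halfPlanePairs (n : ℕ) :
    Nat.card (HalfPlanePairs n) = ∑ j ∈ range (n + 1), hpTotal j * hpTotal (n - j) := by
  rw [HalfPlanePairs, Nat.card_sigma, ← Fin.sum_univ_eq_sum_range]
  simp only [Nat.card_prod, hpTotal]

noncomputable def splitAtLowest (w : {w : Fin (n + 1) → Fin 2 → ℤ // IsSAW 2 n w}) :
    HalfPlanePairs n :=
  ⟨lowestIndex w.1, ⟨_, isHalfPlaneSAW_headWalk w.2 (lowestIndex_le w.1)⟩,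
    ⟨_, isHalfPlaneSAW_tailWalk w.2 (lowestIndex_le w.1)⟩⟩

def joinPair (p : HalfPlanePairs n) : Fin (n + 1) → Fin 2 → ℤ :=
  fun i => if h : (i : ℕ) ≤ p.1 then p.2.1.1 ⟨p.1 - i, by omega⟩ - p.2.1.1 (Fin.last _)
    else p.2.2.1 ⟨i - p.1, by omega⟩ - p.2.1.1 (Fin.last _)

lemma joinPair_splitAtLowest (w : {w : Fin (n + 1) → Fin 2 → ℤ // IsSAW 2 n w}) :
    joinPair (splitAtLowest w) = w.1 := by
  funext i
  by_cases h : (i : ℕ) ≤ lowestIndex w.1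
  · have hi : (⟨lowestIndex w.1 - (lowestIndex w.1 - i), by omega⟩ : Fin (n + 1)) = i :=
      Fin.ext (by simp; omega)
    simp [joinPair, splitAtLowest, headWalk, h, hi, w.2.2.1]
  · have hi : (⟨lowestIndex w.1 + (i - lowestIndex w.1), by omega⟩ : Fin (n + 1)) = i :=
      Fin.ext (by simp; omega)
    simp [joinPair, splitAtLowest, headWalk, tailWalk, h, hi, w.2.2.1]

end split

lemma sawCount_le_sum_hpTotal (n : ℕ) :
    sawCount 2 n ≤ ∑ j ∈ range (n + 1), hpTotal j * hpTotal (n - j) :=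
  card_halfPlanePairs n ▸ Nat.card_le_card_of_injective splitAtLowest fun w w' h =>
    Subtype.ext ((joinPair_splitAtLowest w).symm.trans
      ((congrArg joinPair h).trans (joinPair_splitAtLowest w')))

section hpPartition

variable {n : ℕ} {y z : ℝ}

lemma hpPartition_nonneg (n : ℕ) (hy : 0 ≤ y) : 0 ≤ hpPartition n y :=
  sum_nonneg fun i _ => by positivity

lemma hpPartition_mono (hy : 0 ≤ y) (hyz : y ≤ z) : hpPartition n y ≤ hpPartition n z :=
  sum_le_sum fun i _ => by gcongr

lemma hpPartition_le_div_pow_mul (hy : 0 < y) (hyz : y ≤ z) :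
    hpPartition n z ≤ (z / y) ^ (n + 1) * hpPartition n y := by
  rw [hpPartition, hpPartition, mul_sum]
  refine sum_le_sum fun i hi => ?_
  calc (hpCount n i : ℝ) * z ^ i = (z / y) ^ i * (hpCount n i * y ^ i) := by
        rw [div_pow, div_mul_eq_mul_div, mul_left_comm, mul_div_assoc,
          mul_div_cancel_right₀ _ (pow_pos hy i).ne']
    _ ≤ (z / y) ^ (n + 1) * (hpCount n i * y ^ i) := by
        gcongr
        · exact (one_le_div hy).2 hyz
        · exact mem_range_succ_iff.1 hi

lemma pow_succ_le_hpPartition (hy : 0 ≤ y) : y ^ (n + 1) ≤ hpPartition n y :=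
  calc y ^ (n + 1) ≤ (hpCount n (n + 1) : ℝ) * y ^ (n + 1) :=
        le_mul_of_one_le_left (by positivity) (by exact_mod_cast one_le_hpCount_succ n)
    _ ≤ hpPartition n y :=
        single_le_sum (f := fun i => (hpCount n i : ℝ) * y ^ i) (fun i _ => by positivity)
          (self_mem_range_succ _)

lemma hpPartition_one_le (n : ℕ) : hpPartition n 1 ≤ sawCount 2 n := by
  simpa [hpPartition] using (Nat.cast_le (α := ℝ)).2 (sum_hpCount_le_sawCount n)

lemma mul_hpTotal_le_hpPartition (hy : 0 ≤ y) (m : ℕ) : y * hpTotal m ≤ hpPartition (m + 1) y :=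
  calc y * hpTotal m ≤ (hpCount (m + 1) 1 : ℝ) * y ^ 1 := by
        rw [pow_one, mul_comm]
        gcongr
        exact_mod_cast hpTotal_le_hpCount_succ_one m
    _ ≤ hpPartition (m + 1) y :=
        single_le_sum (f := fun i => (hpCount (m + 1) i : ℝ) * y ^ i) (fun i _ => by positivity)
          (mem_range.2 (by omega))

end hpPartition

def subcriticalFugacities (μ : ℝ) : Set ℝ :=
  {y | 0 < y ∧ ExpGrowthLE (fun n => hpPartition n y) μ}

section growth

variable {μ ν y : ℝ}

lemma one_le_of_tendsto_sawCount
    (hμ : Tendsto (fun n : ℕ => (sawCount 2 n : ℝ) ^ (1 / (n : ℝ))) atTop (𝓝 μ)) : 1 ≤ μ :=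
  ge_of_tendsto hμ <| (eventually_ne_atTop 0).mono fun n hn =>
    Real.one_le_rpow (by exact_mod_cast one_le_sawCount n) (by positivity)

lemma le_of_expGrowthLE_hpPartition
    (hμ : Tendsto (fun n : ℕ => (sawCount 2 n : ℝ) ^ (1 / (n : ℝ))) atTop (𝓝 μ)) (hy : 0 < y)
    (hν : 0 ≤ ν) (h : ExpGrowthLE (fun n => hpPartition n y) ν) : μ ≤ ν := by
  refine le_of_forall_gt_imp_ge_of_dense fun q hq => ?_
  have hq0 : 0 < q := hν.trans_lt hq
  obtain ⟨M, hM⟩ := h.exists_forall_le_mul_pow hq hq0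
  have hh : ∀ m, (hpTotal m : ℝ) ≤ M * q / y * q ^ m := fun m => by
    rw [div_mul_eq_mul_div, le_div_iff₀ hy, mul_assoc, ← pow_succ', mul_comm]
    exact (mul_hpTotal_le_hpPartition hy.le m).trans (hM (m + 1))
  have hc : ∀ n, (sawCount 2 n : ℝ) ≤ (M * q / y) ^ 2 * (n + 1) * q ^ n := fun n =>
    calc (sawCount 2 n : ℝ) ≤ ∑ j ∈ range (n + 1), (hpTotal j : ℝ) * hpTotal (n - j) := by
          exact_mod_cast sawCount_le_sum_hpTotal n
      _ ≤ _ := sum_range_mul_sub_le (fun _ => Nat.cast_nonneg _) hh n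
  exact (expGrowthLE_iff_of_tendsto (fun _ => Nat.cast_nonneg _) hq0.le hμ).1
    (expGrowthLE_of_le_mul_pow hq0 hc)

lemma le_of_expGrowthLE_hpPartition_self (hν : 1 ≤ ν)
    (h : ExpGrowthLE (fun n => hpPartition n y) ν) : y ≤ ν := by
  by_contra! hνy
  have hy : 1 < y := hν.trans_lt hνy
  obtain ⟨n, hn⟩ := (h y hνy).exists
  have := (pow_succ_le_hpPartition (n := n) (zero_le_one.trans hy.le)).trans hn
  rw [pow_succ] at this
  nlinarith [pow_pos (zero_lt_one.trans hy) n]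

lemma expGrowthLE_hpPartition_of_forall_lt (hy : 0 < y) (hμ : 0 ≤ μ)
    (h : ∀ t ∈ Set.Ioo 0 y, ExpGrowthLE (fun n => hpPartition n t) μ) :
    ExpGrowthLE (fun n => hpPartition n y) μ := by
  intro q hq
  obtain ⟨q₁, hμq₁, hq₁q⟩ := exists_between hq
  obtain ⟨q₂, hq₁q₂, hq₂q⟩ := exists_between hq₁q
  have hq₁ : 0 < q₁ := hμ.trans_lt hμq₁
  have hq₂ : 0 < q₂ := hq₁.trans hq₁q₂
  have ht : y * q₁ / q₂ ∈ Set.Ioo 0 y :=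
    ⟨by positivity, (div_lt_iff₀ hq₂).2 (mul_lt_mul_of_pos_left hq₁q₂ hy)⟩
  obtain ⟨M, hM⟩ := (h _ ht).exists_forall_le_mul_pow hμq₁ hq₁
  have hM0 : 0 ≤ M := by simpa using (hpPartition_nonneg 0 ht.1.le).trans (hM 0)
  have hyt : y / (y * q₁ / q₂) = q₂ / q₁ := by field_simp
  refine expGrowthLE_of_le_mul_pow (M := M * (q₂ / q₁)) hq₂ (fun n => ?_) q hq₂q
  calc hpPartition n y ≤ (q₂ / q₁) ^ (n + 1) * hpPartition n (y * q₁ / q₂) :=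
        hyt ▸ hpPartition_le_div_pow_mul ht.1 ht.2.le
    _ ≤ (q₂ / q₁) ^ (n + 1) * (M * q₁ ^ n) := by gcongr; exact hM n
    _ = M * (q₂ / q₁) * 1 * q₂ ^ n := by rw [pow_succ, div_pow]; field_simp
    _ ≤ M * (q₂ / q₁) * (n + 1) * q₂ ^ n := by gcongr; linarith [n.cast_nonneg (α := ℝ)]

lemma mem_subcriticalFugacities_of_le_sSup (hμ : 0 ≤ μ) (hne : (subcriticalFugacities μ).Nonempty)
    (hy : 0 < y) (hyc : y ≤ sSup (subcriticalFugacities μ)) : y ∈ subcriticalFugacities μ := by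
  refine ⟨hy, expGrowthLE_hpPartition_of_forall_lt hy hμ fun t ht => ?_⟩
  obtain ⟨s, hs, hts⟩ := exists_lt_of_lt_csSup hne (ht.2.trans_le hyc)
  exact hs.2.mono fun n => hpPartition_mono ht.1.le hts.le

end growth

/-- there is a critical value `y_c` with `1 ≤ y_c ≤ μ²` such that
`μ(y) = μ` for `0 < y ≤ y_c` and `μ(y) > μ` for `y > y_c`. -/
theorem hp_critical_fugacity (μ : ℝ)
    (hμ : Filter.Tendsto (fun n : ℕ => (sawCount 2 n : ℝ) ^ (1 / (n : ℝ)))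
      Filter.atTop (nhds μ)) :
    ∃ yc : ℝ, 1 ≤ yc ∧ yc ≤ μ ^ 2 ∧
      ∀ y μy : ℝ, 0 < y →
        Filter.Tendsto (fun n : ℕ => hpPartition n y ^ (1 / (n : ℝ)))
          Filter.atTop (nhds μy) →
        (y ≤ yc → μy = μ) ∧ (yc < y → μ < μy) := by
  set S := subcriticalFugacities μ
  have hμ1 : 1 ≤ μ := one_le_of_tendsto_sawCount hμ
  have hμ0 : 0 ≤ μ := zero_le_one.trans hμ1
  have h1S : (1 : ℝ) ∈ S := ⟨one_pos,
    ((expGrowthLE_iff_of_tendsto (fun _ => Nat.cast_nonneg _) hμ0 hμ).2 le_rfl).mono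
      hpPartition_one_le⟩
  have hSμ : ∀ t ∈ S, t ≤ μ := fun t ht => le_of_expGrowthLE_hpPartition_self hμ1 ht.2
  refine ⟨sSup S, le_csSup ⟨μ, hSμ⟩ h1S, (csSup_le ⟨1, h1S⟩ hSμ).trans (by nlinarith),
    fun y μy hy hT => ?_⟩
  have hμy : 0 ≤ μy := ge_of_tendsto' hT fun n => Real.rpow_nonneg (hpPartition_nonneg n hy.le) _
  have hiff : ∀ ν, 0 ≤ ν → (ExpGrowthLE (fun n => hpPartition n y) ν ↔ μy ≤ ν) := fun ν hν =>
    expGrowthLE_iff_of_tendsto (fun n => hpPartition_nonneg n hy.le) hν hT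
  have hlow : μ ≤ μy := le_of_expGrowthLE_hpPartition hμ hy hμy ((hiff μy hμy).2 le_rfl)
  refine ⟨fun hyc => hlow.antisymm' ((hiff μ hμ0).1
    (mem_subcriticalFugacities_of_le_sSup hμ0 ⟨1, h1S⟩ hy hyc).2), fun hyc => hlow.lt_of_ne ?_⟩
  rintro rfl
  exact hyc.not_ge (le_csSup ⟨μ, hSμ⟩ ⟨hy, (hiff μ hμy).2 le_rfl⟩)
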